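/- Let a, b and n > 1 be positive integers with gcd(a, r_b(n)) = 1, set a_m = r_b(n) + a·r_b(m-1) for 1 ≤ m ≤ n, let k be a field, and let I ⊆ k[x_1,…,x_n] be the kernel of the k-algebra homomorphism sending x_m to t^{a_m}. Then I equals the ideal I_2(X) generated by the 2×2 minors of X, and these C(n,2) minors form a minimal generating set: no proper subset of the set of 2×2 minors of X generates I. -/

import Mathlib

/-- The ℓ-th repunit in base `b`: `r_b(ℓ) = ∑_{j=0}^{ℓ-1} b^j`, with `r_b(0) = 0`. -/
def rep (b ℓ : ℕ) : ℕ := ∑ j ∈ Finset.range ℓ, b ^ j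

/-- `a_m = r_b(n) + a · r_b(m-1)`. -/
def aseq (a b n m : ℕ) : ℕ := rep b n + a * rep b (m - 1)

/-- The variable `x_m` (1-indexed, `1 ≤ m ≤ n`) of `K[x_1, …, x_n]`. -/
noncomputable def xv (K : Type*) [Field K] (n m : ℕ) : MvPolynomial (Fin n) K :=
  if h : m - 1 < n then MvPolynomial.X ⟨m - 1, h⟩ else 0

/-- The set of 2×2 minors of the matrix `X` with rows `(x_1^b, …, x_{n-1}^b, x_n^b)` and
`(x_2, …, x_n, x_1^{a+1})`: the binomials `x_{j+1}·x_l^b − x_j^b·x_{l+1}` for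
`1 ≤ j < l ≤ n-1` together with `x_{l+1}·x_n^b − x_1^{a+1}·x_l^b` for `1 ≤ l ≤ n-1`. -/
def minorsX (K : Type*) [Field K] (a b n : ℕ) : Set (MvPolynomial (Fin n) K) :=
  { f | (∃ j l : ℕ, 1 ≤ j ∧ j < l ∧ l ≤ n - 1 ∧
          f = xv K n (j + 1) * xv K n l ^ b - xv K n j ^ b * xv K n (l + 1)) ∨
        (∃ l : ℕ, 1 ≤ l ∧ l ≤ n - 1 ∧
          f = xv K n (l + 1) * xv K n n ^ b - xv K n 1 ^ (a + 1) * xv K n l ^ b) }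

/-- The `K`-algebra homomorphism `φ : K[x_1,…,x_n] → K[t]`, `x_m ↦ t^{a_m}`. -/
noncomputable def φmap (K : Type*) [Field K] (a b n : ℕ) :
    MvPolynomial (Fin n) K →ₐ[K] Polynomial K :=
  MvPolynomial.aeval fun m : Fin n => Polynomial.X ^ aseq a b n ((m : ℕ) + 1)

/-!
Grade `x_m` by `a_m`: then `φ (x^e) = t^(w e)`, and every minor is the difference of two monomials
of equal weight, so `I_2(X) ⊆ I`. Rewriting the leading monomial of a minor into the trailing one
strictly decreases the linear measure `∑ (n - m) r_b(m) e_m` (0-indexed), so every monomial is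
congruent modulo `I_2(X)` to a standard one, divisible by no leading monomial. The exponents
`e_1, …, e_{n-1}` of a standard monomial are digits in the place-value system
`r_b(1), r_b(2), …` (all `≤ b`, and `< b` above the lowest nonzero one), so they are determined
by `T(e) = ∑ e_m r_b(m) < r_b(n)`. As `w e = deg(e) r_b(n) + a T(e)` and `gcd(a, r_b(n)) = 1`,
the weight determines a standard monomial; hence an element of `I`, being congruent to a
combination of standard monomials of distinct weights, lies in `I_2(X)`.

For minimality, fix the minor of the columns `j₀ < l₀` and sum the coefficients of the monomials
of degree `b + 1` in the weight class of its leading monomial not involving `x_1, …, x_{j₀}`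
(no such restriction when `l₀ = n`). This linear form kills all multiples of the other minors but
not the fixed one.
-/

open MvPolynomial Finsupp

section MonomialMaps

variable {σ R : Type*} [CommRing R]

lemma aeval_X_pow_monomial (w : σ → ℕ) (e : σ →₀ ℕ) (c : R) :
    aeval (fun i => (Polynomial.X : Polynomial R) ^ w i) (monomial e c) =
      Polynomial.C c * Polynomial.X ^ weight w e := by
  classical
  rw [aeval_monomial, Polynomial.algebraMap_eq, weight_apply, Finsupp.prod, Finsupp.sum,
    ← Finset.prod_pow_eq_pow_sum]
  simp only [← pow_mul, smul_eq_mul, mul_comm]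

lemma eq_zero_of_aeval_X_pow_eq_zero (w : σ → ℕ) {P : MvPolynomial σ R}
    (hP : aeval (fun i => (Polynomial.X : Polynomial R) ^ w i) P = 0)
    (hinj : Set.InjOn (weight w) (P.support : Set (σ →₀ ℕ))) : P = 0 := by
  ext d
  by_contra hd
  have hcoeff := congrArg (Polynomial.coeff · (weight w d)) hP
  simp only [Polynomial.coeff_zero] at hcoeff
  conv_lhs at hcoeff => rw [P.as_sum]
  rw [map_sum, Polynomial.finsetSum_coeff,
    Finset.sum_eq_single_of_mem d (MvPolynomial.mem_support_iff.2 hd)] at hcoeff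
  · simp [aeval_X_pow_monomial] at hcoeff
    exact hd hcoeff
  · intro e he hne
    rw [aeval_X_pow_monomial, Polynomial.coeff_C_mul_X_pow,
      if_neg fun h => hne (hinj he (MvPolynomial.mem_support_iff.2 hd) h.symm)]

lemma ker_aeval_X_pow_le (w : σ → ℕ) {J : Ideal (MvPolynomial σ R)}
    (hJ : J ≤ RingHom.ker (aeval fun i => (Polynomial.X : Polynomial R) ^ w i))
    {N : Set (σ →₀ ℕ)} (hN : Set.InjOn (weight w) N)
    (hred : ∀ e, ∃ e' ∈ N, monomial e (1 : R) - monomial e' 1 ∈ J) :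
    RingHom.ker (aeval fun i => (Polynomial.X : Polynomial R) ^ w i) ≤ J := by
  classical
  choose nf hnfN hnfJ using hred
  intro f hf
  set g := ∑ e ∈ f.support, monomial (nf e) (coeff e f)
  have hfg : f - g ∈ J := by
    rw [show f - g = ∑ e ∈ f.support, (monomial e (coeff e f) - monomial (nf e) (coeff e f)) by
      rw [Finset.sum_sub_distrib, ← f.as_sum]]
    refine J.sum_mem fun e _ => ?_
    have := J.mul_mem_left (C (coeff e f)) (hnfJ e)
    rwa [mul_sub, C_mul_monomial, C_mul_monomial, mul_one] at this
  have hg : g = 0 := by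
    refine eq_zero_of_aeval_X_pow_eq_zero w ?_ (hN.mono fun e he => ?_)
    · have := hJ hfg
      rwa [RingHom.mem_ker, map_sub, RingHom.mem_ker.1 hf, zero_sub, neg_eq_zero] at this
    · obtain ⟨e₀, -, he₀⟩ := Finset.mem_biUnion.1 (MvPolynomial.support_sum he)
      rw [Finset.mem_singleton.1 (support_monomial_subset he₀)]
      exact hnfN e₀
  rwa [hg, sub_zero] at hfg

variable {ι : Type*} (s : Set ι) (u v : ι → σ →₀ ℕ)

lemma exists_sub_mem_span_binomials (μ : (σ →₀ ℕ) →+ ℕ) (hμ : ∀ j ∈ s, μ (v j) < μ (u j))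
    (e : σ →₀ ℕ) :
    ∃ e', (∀ j ∈ s, ¬ u j ≤ e') ∧ monomial e (1 : R) - monomial e' 1 ∈
      Ideal.span ((fun j => monomial (u j) (1 : R) - monomial (v j) 1) '' s) := by
  induction hm : μ e using Nat.strong_induction_on generalizing e with
  | _ m ih =>
  by_cases hred : ∀ j ∈ s, ¬ u j ≤ e
  · exact ⟨e, hred, by rw [sub_self]; exact zero_mem _⟩
  push Not at hred
  obtain ⟨j, hj, hle⟩ := hred
  obtain ⟨c, rfl⟩ := exists_add_of_le hle
  obtain ⟨e', he', hmem⟩ := ih _ (by simpa [← hm] using hμ j hj) (v j + c) rfl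
  refine ⟨e', he', ?_⟩
  have hstep : monomial (u j + c) (1 : R) - monomial (v j + c) 1 =
      monomial c 1 * (monomial (u j) 1 - monomial (v j) 1) := by
    rw [mul_sub, monomial_mul, monomial_mul, one_mul, add_comm c, add_comm c]
  have := add_mem (Ideal.mul_mem_left _ (monomial c 1)
    (Ideal.subset_span (Set.mem_image_of_mem _ hj))) hmem
  rwa [← hstep, sub_add_sub_cancel] at this

lemma monomial_sub_monomial_notMem_span [Nontrivial R] (T : Set (σ →₀ ℕ))
    (hT : ∀ j ∈ s, ∀ c, c + u j ∈ T ↔ c + v j ∈ T) {u₀ v₀ : σ →₀ ℕ} (hu₀ : u₀ ∈ T)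
    (hv₀ : v₀ ∉ T) :
    monomial u₀ (1 : R) - monomial v₀ 1 ∉
      Ideal.span ((fun j => monomial (u j) (1 : R) - monomial (v j) 1) '' s) := by
  classical
  let L := (basisMonomials σ R).constr R fun e => if e ∈ T then (1 : R) else 0
  have hL : ∀ e a, L (monomial e a) = if e ∈ T then a else 0 := fun e a => by
    rw [← mul_one a, ← smul_eq_mul, ← smul_monomial, map_smul]
    change a • L (basisMonomials σ R e) = _
    rw [Module.Basis.constr_basis]
    split_ifs <;> simp
  intro hmem
  suffices ∀ P, L (P * (monomial u₀ 1 - monomial v₀ 1)) = 0 by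
    simpa [hL, hu₀, hv₀] using this 1
  refine Submodule.span_induction (p := fun f _ => ∀ P, L (P * f) = 0) ?_ (by simp)
    (fun f g _ _ hf hg P => by rw [mul_add, map_add, hf, hg, add_zero])
    (fun a f _ hf P => by rw [smul_eq_mul, ← mul_assoc, hf]) hmem
  rintro _ ⟨j, hj, rfl⟩ P
  induction P using MvPolynomial.induction_on' with
  | monomial c a =>
    rw [mul_sub, monomial_mul, monomial_mul, map_sub, hL, hL, if_congr (hT j hj c) rfl rfl,
      sub_self]
  | add P Q hP hQ => rw [add_mul, map_add, hP, hQ, add_zero]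

end MonomialMaps

section Repunit

variable {b : ℕ}

lemma rep_zero (b : ℕ) : rep b 0 = 0 := rfl

lemma rep_succ (b ℓ : ℕ) : rep b (ℓ + 1) = b * rep b ℓ + 1 := geom_sum_succ

lemma rep_succ_eq_add_pow (b ℓ : ℕ) : rep b (ℓ + 1) = rep b ℓ + b ^ ℓ := Finset.sum_range_succ _ _

lemma rep_monotone (b : ℕ) : Monotone (rep b) :=
  monotone_nat_of_le_succ fun ℓ => (rep_succ_eq_add_pow b ℓ).symm ▸ Nat.le_add_right _ _

lemma rep_strictMono (hb : 0 < b) : StrictMono (rep b) :=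
  strictMono_nat_of_lt_succ fun ℓ =>
    (rep_succ_eq_add_pow b ℓ).symm ▸ Nat.lt_add_of_pos_right (pow_pos hb ℓ)

def IsRepDigits (b : ℕ) (d : ℕ → ℕ) : Prop :=
  (∀ j, 0 < j → d j ≤ b) ∧ ∀ i l, 0 < i → i < l → 0 < d i → d l < b

variable {d d' : ℕ → ℕ}

lemma IsRepDigits.sum_range_lt (hd : IsRepDigits b d) (N : ℕ) :
    ∑ j ∈ Finset.range (N + 1), d j * rep b j < rep b (N + 1) := by
  induction N with
  | zero => simp [rep_zero, rep_succ]
  | succ N ih =>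
    rw [Finset.sum_range_succ, rep_succ b (N + 1)]
    by_cases htop : d (N + 1) < b
    · have := Nat.mul_le_mul_right (rep b (N + 1)) (Nat.succ_le_of_lt htop)
      rw [Nat.succ_mul] at this
      omega
    · have hlow : ∑ j ∈ Finset.range (N + 1), d j * rep b j = 0 := by
        refine Finset.sum_eq_zero fun j hj => ?_
        rcases Nat.eq_zero_or_pos j with rfl | hj0
        · rw [rep_zero, mul_zero]
        · have : d j = 0 := by
            by_contra h
            exact htop (hd.2 j (N + 1) hj0 (Finset.mem_range.1 hj) (Nat.pos_of_ne_zero h))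
          rw [this, zero_mul]
      rw [hlow, le_antisymm (hd.1 _ N.succ_pos) (not_lt.1 htop)]
      omega

lemma IsRepDigits.sum_range_div_mod (hd : IsRepDigits b d) (M : ℕ) :
    (∑ j ∈ Finset.range (M + 2), d j * rep b j) / rep b (M + 1) = d (M + 1) ∧
      (∑ j ∈ Finset.range (M + 2), d j * rep b j) % rep b (M + 1) =
        ∑ j ∈ Finset.range (M + 1), d j * rep b j :=
  (Nat.div_mod_unique (by rw [rep_succ]; omega)).2
    ⟨by rw [Finset.sum_range_succ _ (M + 1)]; ring, hd.sum_range_lt M⟩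

lemma IsRepDigits.eq_of_sum_range_eq (hd : IsRepDigits b d) (hd' : IsRepDigits b d') (N : ℕ)
    (h : ∑ j ∈ Finset.range N, d j * rep b j = ∑ j ∈ Finset.range N, d' j * rep b j)
    {j : ℕ} (hj : 0 < j) (hjN : j < N) : d j = d' j := by
  induction N with
  | zero => omega
  | succ N ih =>
    obtain ⟨M, rfl⟩ := Nat.exists_eq_add_one_of_ne_zero (show N ≠ 0 by omega)
    obtain ⟨hdiv, hmod⟩ := hd.sum_range_div_mod M
    obtain ⟨hdiv', hmod'⟩ := hd'.sum_range_div_mod M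
    rw [h] at hdiv hmod
    rcases Nat.lt_succ_iff_lt_or_eq.1 hjN with hjM | rfl
    · exact ih (hmod.symm.trans hmod') hjM
    · exact hdiv.symm.trans hdiv'

end Repunit

section Exponents

variable {n : ℕ} (a b : ℕ)

/-- Variables are `0`-indexed: `X m` with `m : Fin n` is the paper's `x_{m+1}`, of weight
`a_{m+1}`. -/
def varWeight (n : ℕ) (m : Fin n) : ℕ := aseq a b n (m + 1)

/-- The exponent of the entry in column `i` of the second row `(x_2, …, x_n, x_1^{a+1})`
of `X`. -/
noncomputable def yExp (i : Fin n) : Fin n →₀ ℕ :=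
  if h : (i : ℕ) + 1 < n then single ⟨i + 1, h⟩ 1 else single ⟨0, i.pos⟩ (a + 1)

noncomputable def leadExp (i k : Fin n) : Fin n →₀ ℕ := yExp a i + single k b

noncomputable def trailExp (i k : Fin n) : Fin n →₀ ℕ := single i b + yExp a k

/-- The minor `y_i x_k^b - x_i^b y_k` of the columns `i < k` of `X`, where
`y_i = x^(yExp a i)`. -/
noncomputable def minor (K : Type*) [Field K] (a b : ℕ) (i k : Fin n) :
    MvPolynomial (Fin n) K :=
  monomial (leadExp a b i k) 1 - monomial (trailExp a b i k) 1

variable {a b}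

lemma yExp_of_lt {i k : Fin n} (hik : i < k) :
    yExp a i = single ⟨i + 1, lt_of_le_of_lt (Nat.succ_le_of_lt hik) k.isLt⟩ 1 :=
  dif_pos _

lemma xv_eq (K : Type*) [Field K] {m : ℕ} (h1 : 1 ≤ m) (h2 : m ≤ n) :
    xv K n m = X ⟨m - 1, by omega⟩ :=
  dif_pos _

lemma minor_eq_xv (K : Type*) [Field K] {j l : ℕ} (hj : 1 ≤ j) (hjl : j < l) (hl : l ≤ n - 1) :
    minor K a b ⟨j - 1, by omega⟩ ⟨l - 1, by omega⟩ =
      xv K n (j + 1) * xv K n l ^ b - xv K n j ^ b * xv K n (l + 1) := by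
  rw [xv_eq K (by omega) (by omega), xv_eq K (by omega) (by omega), xv_eq K hj (by omega),
    xv_eq K (by omega) (by omega), X_pow_eq_monomial, X_pow_eq_monomial, X, X, monomial_mul,
    monomial_mul, minor, leadExp, trailExp, yExp, yExp, dif_pos (by simp; omega),
    dif_pos (by simp; omega)]
  congr 3 <;> simp [Nat.sub_add_cancel hj, Nat.sub_add_cancel (hj.trans hjl.le)]

lemma minor_eq_xv_last (K : Type*) [Field K] {l : ℕ} (hl : 1 ≤ l) (hln : l ≤ n - 1) :
    minor K a b ⟨l - 1, by omega⟩ ⟨n - 1, by omega⟩ =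
      xv K n (l + 1) * xv K n n ^ b - xv K n 1 ^ (a + 1) * xv K n l ^ b := by
  rw [xv_eq K (by omega) (by omega), xv_eq K (by omega) (by omega), xv_eq K le_rfl (by omega),
    xv_eq K hl (by omega), X_pow_eq_monomial, X_pow_eq_monomial, X_pow_eq_monomial, X,
    monomial_mul, monomial_mul, minor, leadExp, trailExp, yExp, yExp,
    dif_pos (by simp; omega), dif_neg (by simp; omega), add_comm (single _ (a + 1))]
  congr 3 <;> simp [Nat.sub_add_cancel hl]

lemma minorsX_eq (K : Type*) [Field K] :
    minorsX K a b n = (fun p : Fin n × Fin n => minor K a b p.1 p.2) '' {p | p.1 < p.2} := by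
  ext f
  constructor
  · rintro (⟨j, l, hj, hjl, hl, rfl⟩ | ⟨l, hl, hln, rfl⟩)
    · exact ⟨(⟨j - 1, by omega⟩, ⟨l - 1, by omega⟩), show j - 1 < l - 1 by omega,
        minor_eq_xv K hj hjl hl⟩
    · exact ⟨(⟨l - 1, by omega⟩, ⟨n - 1, by omega⟩), show l - 1 < n - 1 by omega,
        minor_eq_xv_last K hl hln⟩
  · rintro ⟨⟨⟨i, hi⟩, ⟨k, hk⟩⟩, hik, rfl⟩
    change i < k at hik
    by_cases hkn : k + 1 < n
    · have := minor_eq_xv (n := n) (a := a) (b := b) K (j := i + 1) (l := k + 1) (by omega)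
        (by omega) (by omega)
      simp only [Nat.add_sub_cancel] at this
      exact Or.inl ⟨i + 1, k + 1, by omega, by omega, by omega, this⟩
    · obtain rfl : k = n - 1 := by omega
      have := minor_eq_xv_last (n := n) (a := a) (b := b) K (l := i + 1) (by omega) (by omega)
      simp only [Nat.add_sub_cancel] at this
      exact Or.inr ⟨i + 1, by omega, by omega, this⟩

end Exponents

section Weights

variable {n a b : ℕ}

lemma φmap_eq_aeval (K : Type*) [Field K] :
    φmap K a b n = aeval fun m => Polynomial.X ^ varWeight a b n m :=
  rfl

lemma weight_yExp (i : Fin n) :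
    weight (varWeight a b n) (yExp a i) + b * rep b n = b * varWeight a b n i + rep b n + a := by
  unfold yExp
  split_ifs with h
  · simp only [weight_single, varWeight, aseq, smul_eq_mul, one_mul, Nat.add_sub_cancel,
      rep_succ]
    ring
  · have hrep : rep b n = b * rep b i + 1 := by rw [← rep_succ]; congr 1; omega
    simp only [weight_single, varWeight, aseq, smul_eq_mul, Nat.add_sub_cancel, rep_zero,
      mul_zero, add_zero, hrep]
    ring

lemma weight_leadExp_eq_weight_trailExp (i k : Fin n) :
    weight (varWeight a b n) (leadExp a b i k) = weight (varWeight a b n) (trailExp a b i k) := by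
  have hi := weight_yExp (a := a) (b := b) i
  have hk := weight_yExp (a := a) (b := b) k
  simp only [leadExp, trailExp, map_add, weight_single, smul_eq_mul] at hi hk ⊢
  omega

-- Chosen so that `redMeasure (y_i) - b * redMeasure (x_i) = (n - 1 - i) - b r_b(i)` is strictly
-- decreasing in `i` (see `redMeasure_yExp`).
def redMeasure (b n : ℕ) (m : Fin n) : ℕ := (n - m) * rep b m

lemma redMeasure_yExp (i : Fin n) :
    weight (redMeasure b n) (yExp a i) + b * rep b i = b * redMeasure b n i + (n - 1 - i) := by
  unfold yExp
  split_ifs with h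
  · obtain ⟨s, hs⟩ : ∃ s, n = i + 1 + s := ⟨n - (i + 1), by omega⟩
    simp only [weight_single, redMeasure, smul_eq_mul, one_mul, rep_succ,
      show n - (i + 1) = s by omega, show n - i = s + 1 by omega, show n - 1 - i = s by omega]
    ring
  · simp only [weight_single, redMeasure, smul_eq_mul, rep_zero, mul_zero, zero_add,
      show n - i = 1 by omega, show n - 1 - i = 0 by omega]
    ring

lemma redMeasure_trailExp_lt_leadExp {i k : Fin n} (hik : i < k) :
    weight (redMeasure b n) (trailExp a b i k) < weight (redMeasure b n) (leadExp a b i k) := by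
  have hi := redMeasure_yExp (a := a) (b := b) i
  have hk := redMeasure_yExp (a := a) (b := b) k
  have hrep := Nat.mul_le_mul_left b (rep_monotone b hik.le)
  simp only [leadExp, trailExp, map_add, weight_single, smul_eq_mul] at hi hk ⊢
  have := k.isLt
  have : (i : ℕ) < k := hik
  omega

end Weights

section Kernel

variable {n a b : ℕ} (K : Type*) [Field K]

lemma span_minorsX_le_ker : Ideal.span (minorsX K a b n) ≤ RingHom.ker (φmap K a b n) := by
  rw [minorsX_eq, Ideal.span_le]
  rintro _ ⟨⟨i, k⟩, -, rfl⟩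
  simp [minor, φmap_eq_aeval, aeval_X_pow_monomial, weight_leadExp_eq_weight_trailExp]

def IsStandard (a b : ℕ) (e : Fin n →₀ ℕ) : Prop := ∀ i k : Fin n, i < k → ¬ leadExp a b i k ≤ e

lemma exists_isStandard_sub_mem_span (e : Fin n →₀ ℕ) :
    ∃ e', IsStandard a b e' ∧
      monomial e (1 : K) - monomial e' 1 ∈ Ideal.span (minorsX K a b n) := by
  obtain ⟨e', he', hmem⟩ := exists_sub_mem_span_binomials (R := K) {p : Fin n × Fin n | p.1 < p.2}
    (fun p => leadExp a b p.1 p.2) (fun p => trailExp a b p.1 p.2) (weight (redMeasure b n))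
    (fun _ hp => redMeasure_trailExp_lt_leadExp hp) e
  exact ⟨e', fun i k hik => he' (i, k) hik, minorsX_eq K ▸ hmem⟩

end Kernel

section Standard

variable {n a b : ℕ} {e f : Fin n →₀ ℕ}

lemma weight_varWeight_eq (e : Fin n →₀ ℕ) :
    weight (varWeight a b n) e = degree e * rep b n + a * weight (fun m : Fin n => rep b m) e := by
  simp only [weight_eq_sum, degree_eq_sum, varWeight, aseq, Nat.add_sub_cancel, smul_eq_mul,
    Finset.sum_mul, Finset.mul_sum, ← Finset.sum_add_distrib]
  exact Finset.sum_congr rfl fun m _ => by ring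

lemma yExp_pred {m : Fin n} (hm : 0 < (m : ℕ)) :
    yExp a (⟨m - 1, by omega⟩ : Fin n) = single m 1 := by
  rw [yExp, dif_pos (by simp; omega)]
  exact congrArg (single · 1) (Fin.ext (by simp; omega))

lemma IsStandard.le_of_pos (he : IsStandard a b e) {m : Fin n} (hm : 0 < (m : ℕ)) : e m ≤ b := by
  by_contra! hlt
  refine he ⟨m - 1, by omega⟩ m (show (m : ℕ) - 1 < m by omega) ?_
  rw [leadExp, yExp_pred hm, ← single_add, single_le_iff]
  omega

lemma IsStandard.lt_of_lt (he : IsStandard a b e) {m l : Fin n} (hm : 0 < (m : ℕ)) (hml : m < l)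
    (hpos : 0 < e m) : e l < b := by
  by_contra! hle
  have : (m : ℕ) < l := hml
  refine he ⟨m - 1, by omega⟩ l (show (m : ℕ) - 1 < l by omega) ?_
  rw [leadExp, yExp_pred hm]
  intro x
  simp only [Finsupp.add_apply, Finsupp.single_apply]
  split_ifs with h1 h2 <;> subst_vars <;> omega

def natExtend (e : Fin n →₀ ℕ) (j : ℕ) : ℕ := if h : j < n then e ⟨j, h⟩ else 0

lemma sum_mul_eq_sum_range_natExtend (e : Fin n →₀ ℕ) (g : ℕ → ℕ) :
    ∑ m : Fin n, e m * g m = ∑ j ∈ Finset.range n, natExtend e j * g j := by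
  rw [← Fin.sum_univ_eq_sum_range]
  simp [natExtend]

lemma IsStandard.isRepDigits_natExtend (hb : 0 < b) (he : IsStandard a b e) :
    IsRepDigits b (natExtend e) := by
  refine ⟨fun j hj => ?_, fun i l hi hil hpos => ?_⟩
  · unfold natExtend
    split_ifs with h
    · exact he.le_of_pos (m := ⟨j, h⟩) hj
    · exact Nat.zero_le b
  · unfold natExtend at hpos ⊢
    split_ifs at hpos ⊢ with hl h
    · exact he.lt_of_lt (m := ⟨i, h⟩) (l := ⟨l, hl⟩) hi hil hpos
    · omega
    all_goals exact hb

lemma IsStandard.weight_rep_lt (hb : 0 < b) (he : IsStandard a b e) (hn : 0 < n) :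
    weight (fun m : Fin n => rep b m) e < rep b n := by
  simp only [weight_eq_sum, smul_eq_mul, sum_mul_eq_sum_range_natExtend e (rep b)]
  obtain ⟨N, rfl⟩ := Nat.exists_eq_add_one_of_ne_zero hn.ne'
  exact (he.isRepDigits_natExtend hb).sum_range_lt N

lemma IsStandard.eq_of_weight_rep_eq (hb : 0 < b) (he : IsStandard a b e)
    (hf : IsStandard a b f)
    (hT : weight (fun m : Fin n => rep b m) e = weight (fun m : Fin n => rep b m) f)
    (hdeg : degree e = degree f) : e = f := by
  simp only [weight_eq_sum, smul_eq_mul, sum_mul_eq_sum_range_natExtend _ (rep b)] at hT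
  have hpos : ∀ j, 0 < j → j < n → natExtend e j = natExtend f j := fun j =>
    (he.isRepDigits_natExtend hb).eq_of_sum_range_eq (hf.isRepDigits_natExtend hb) n hT
  ext m
  rcases Nat.eq_zero_or_pos m with hm | hm
  · have hsum : ∀ g : Fin n →₀ ℕ, degree g = ∑ j ∈ Finset.range n, natExtend g j := fun g => by
      simpa [degree_eq_sum] using sum_mul_eq_sum_range_natExtend g fun _ => 1
    obtain ⟨N, rfl⟩ := Nat.exists_eq_add_one_of_ne_zero (show n ≠ 0 by omega)
    rw [hsum, hsum, Finset.sum_range_succ', Finset.sum_range_succ',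
      Finset.sum_congr rfl fun j hj => hpos (j + 1) j.succ_pos (by simp at hj; omega)] at hdeg
    obtain rfl : m = 0 := Fin.ext hm
    simpa [natExtend] using Nat.add_left_cancel hdeg
  · simpa [natExtend] using hpos m hm m.isLt

lemma weight_injOn_isStandard (hb : 0 < b) (hgcd : Nat.gcd a (rep b n) = 1) :
    Set.InjOn (weight (varWeight a b n)) {e | IsStandard a b e} := by
  intro e he f hf hw
  rcases Nat.eq_zero_or_pos n with rfl | hn
  · exact Subsingleton.elim e f
  have hR : 0 < rep b n := (rep_strictMono hb).monotone hn
  rw [weight_varWeight_eq, weight_varWeight_eq] at hw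
  have hT : weight (fun m : Fin n => rep b m) e = weight (fun m : Fin n => rep b m) f := by
    refine Nat.ModEq.eq_of_lt_of_lt (Nat.ModEq.cancel_left_of_coprime (c := a)
      (by rwa [Nat.gcd_comm]) ?_) (he.weight_rep_lt hb hn) (hf.weight_rep_lt hb hn)
    simpa [Nat.ModEq] using congrArg (· % rep b n) hw
  rw [hT] at hw
  exact he.eq_of_weight_rep_eq hb hf hT (Nat.eq_of_mul_eq_mul_right hR (Nat.add_right_cancel hw))

end Standard

section Minimality

variable {n a b : ℕ} {i k i₀ k₀ : Fin n}

lemma weight_leadExp (hik : i < k) :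
    weight (varWeight a b n) (leadExp a b i k) =
      (b + 1) * rep b n + a * (rep b (i + 1) + b * rep b k) := by
  simp only [leadExp, yExp_of_lt hik, map_add, weight_single, varWeight, aseq, smul_eq_mul,
    Nat.add_sub_cancel]
  ring

lemma degree_leadExp (hik : i < k) : degree (leadExp a b i k) = b + 1 := by
  simp [leadExp, yExp_of_lt hik, add_comm]

lemma degree_trailExp (k : Fin n) :
    degree (trailExp a b i k) = b + if (k : ℕ) + 1 < n then 1 else a + 1 := by
  unfold trailExp yExp
  split_ifs <;> simp

lemma leadExp_apply_of_le (hik : i < k) {m : Fin n} (hm : m ≤ i) : leadExp a b i k m = 0 := by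
  have : (m : ℕ) ≤ i := hm
  have : (i : ℕ) < k := hik
  simp only [leadExp, yExp_of_lt hik, Finsupp.add_apply, Finsupp.single_apply, Fin.ext_iff]
  split_ifs <;> omega

lemma trailExp_apply_of_lt (hik : i < k) (hk : (k : ℕ) + 1 < n) {m : Fin n} (hm : m < i) :
    trailExp a b i k m = 0 := by
  have : (m : ℕ) < i := hm
  have : (i : ℕ) < k := hik
  simp only [trailExp, yExp, dif_pos hk, Finsupp.add_apply, Finsupp.single_apply, Fin.ext_iff]
  split_ifs <;> omega

lemma le_trailExp_apply_self : b ≤ trailExp a b i k i := by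
  simp [trailExp]

-- Closed under every rewriting step `leadExp i k ↦ trailExp i k` except the one of the minor of
-- the columns `i₀, k₀` (see `add_leadExp_mem_iff`).
def separatingSet (a b : ℕ) (i₀ k₀ : Fin n) : Set (Fin n →₀ ℕ) :=
  {e | weight (varWeight a b n) e = weight (varWeight a b n) (leadExp a b i₀ k₀) ∧
    degree e = b + 1 ∧ ((k₀ : ℕ) + 1 < n → ∀ m ≤ i₀, e m = 0)}

lemma leadExp_mem_separatingSet (hik₀ : i₀ < k₀) : leadExp a b i₀ k₀ ∈ separatingSet a b i₀ k₀ :=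
  ⟨rfl, degree_leadExp hik₀, fun _ _ hm => leadExp_apply_of_le hik₀ hm⟩

lemma eq_zero_of_add_leadExp_mem (hik : i < k) {c : Fin n →₀ ℕ}
    (h : c + leadExp a b i k ∈ separatingSet a b i₀ k₀) : c = 0 := by
  have := h.2.1
  rw [map_add, degree_leadExp hik] at this
  exact (degree_eq_zero_iff c).1 (by omega)

lemma add_trailExp_notMem_of_le (hb : 0 < b) (hk₀ : (k₀ : ℕ) + 1 < n) (hi : i ≤ i₀)
    (c : Fin n →₀ ℕ) : c + trailExp a b i k ∉ separatingSet a b i₀ k₀ := fun h => by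
  have := h.2.2 hk₀ i hi
  have := le_trailExp_apply_self (a := a) (b := b) (i := i) (k := k)
  rw [Finsupp.add_apply] at *
  omega

lemma add_trailExp_notMem_of_last (ha : 0 < a) (hk : ¬(k : ℕ) + 1 < n) (c : Fin n →₀ ℕ) :
    c + trailExp a b i k ∉ separatingSet a b i₀ k₀ := fun h => by
  have := h.2.1
  rw [map_add, degree_trailExp, if_neg hk] at this
  omega

lemma rep_add_eq_of_leadExp_mem (ha : 0 < a) (hik : i < k) (hik₀ : i₀ < k₀)
    (h : leadExp a b i k ∈ separatingSet a b i₀ k₀) :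
    rep b (i + 1) + b * rep b k = rep b (i₀ + 1) + b * rep b k₀ := by
  have hw := h.1
  rw [weight_leadExp hik, weight_leadExp hik₀] at hw
  exact Nat.eq_of_mul_eq_mul_left ha (Nat.add_left_cancel hw)

lemma le_of_leadExp_mem_of_last (ha : 0 < a) (hb : 0 < b) (hik : i < k) (hik₀ : i₀ < k₀)
    (hk : ¬(k : ℕ) + 1 < n) (h : leadExp a b i k ∈ separatingSet a b i₀ k₀) : i ≤ i₀ := by
  have hrep := rep_add_eq_of_leadExp_mem ha hik hik₀ h
  have := Nat.mul_le_mul_left b (rep_monotone b (show (k₀ : ℕ) ≤ k by omega))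
  have := (rep_strictMono hb).le_iff_le.1 (show rep b (i + 1) ≤ rep b (i₀ + 1) by omega)
  exact Fin.le_def.2 (by omega)

lemma eq_of_leadExp_mem_of_le (ha : 0 < a) (hb : 0 < b) (hik : i < k) (hik₀ : i₀ < k₀)
    (h : leadExp a b i k ∈ separatingSet a b i₀ k₀) (hi : i ≤ i₀) : i = i₀ ∧ k = k₀ := by
  have hrep := rep_add_eq_of_leadExp_mem ha hik hik₀ h
  have hi' : (i : ℕ) ≤ i₀ := hi
  have hi₀ : i = i₀ := by
    by_cases hk₀ : (k₀ : ℕ) + 1 < n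
    · refine le_antisymm hi (Fin.le_def.2 (Nat.le_of_lt_succ (Nat.lt_of_not_le fun hle => ?_)))
      have := h.2.2 hk₀ ⟨i + 1, by have := k.isLt; omega⟩ (Fin.le_def.2 hle)
      simp [leadExp, yExp_of_lt hik] at this
    · have := Nat.mul_le_mul_left b (rep_monotone b (show (k : ℕ) ≤ k₀ by omega))
      have := rep_monotone b (show (i : ℕ) + 1 ≤ i₀ + 1 by omega)
      exact Fin.ext (by
        simpa using (rep_strictMono hb).injective (show rep b (i + 1) = rep b (i₀ + 1) by omega))
  subst hi₀
  exact ⟨rfl, Fin.ext ((rep_strictMono hb).injective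
    (Nat.eq_of_mul_eq_mul_left hb (Nat.add_left_cancel hrep)))⟩

lemma add_leadExp_notMem (ha : 0 < a) (hb : 0 < b) (hik : i < k) (hik₀ : i₀ < k₀)
    (hne : (i, k) ≠ (i₀, k₀)) (h : i ≤ i₀ ∨ ¬(k : ℕ) + 1 < n) (c : Fin n →₀ ℕ) :
    c + leadExp a b i k ∉ separatingSet a b i₀ k₀ := fun hmem => by
  obtain rfl := eq_zero_of_add_leadExp_mem hik hmem
  rw [zero_add] at hmem
  have hi : i ≤ i₀ := h.elim id fun hk => le_of_leadExp_mem_of_last ha hb hik hik₀ hk hmem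
  obtain ⟨rfl, rfl⟩ := eq_of_leadExp_mem_of_le ha hb hik hik₀ hmem hi
  exact hne rfl

lemma add_leadExp_mem_iff (ha : 0 < a) (hb : 0 < b) (hik : i < k) (hik₀ : i₀ < k₀)
    (hne : (i, k) ≠ (i₀, k₀)) (c : Fin n →₀ ℕ) :
    c + leadExp a b i k ∈ separatingSet a b i₀ k₀ ↔
      c + trailExp a b i k ∈ separatingSet a b i₀ k₀ := by
  by_cases hk : (k : ℕ) + 1 < n
  swap
  · exact iff_of_false (add_leadExp_notMem ha hb hik hik₀ hne (Or.inr hk) c)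
      (add_trailExp_notMem_of_last ha hk c)
  have hw : weight (varWeight a b n) (c + leadExp a b i k) =
      weight (varWeight a b n) (c + trailExp a b i k) := by
    rw [map_add, map_add, weight_leadExp_eq_weight_trailExp]
  have hdeg : degree (c + leadExp a b i k) = degree (c + trailExp a b i k) := by
    rw [map_add, map_add, degree_leadExp hik, degree_trailExp, if_pos hk]
  by_cases hk₀ : (k₀ : ℕ) + 1 < n
  · by_cases hi : i ≤ i₀
    · exact iff_of_false (add_leadExp_notMem ha hb hik hik₀ hne (Or.inl hi) c)
        (add_trailExp_notMem_of_le hb hk₀ hi c)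
    have hlow : ∀ m ≤ i₀, (c + leadExp a b i k) m = (c + trailExp a b i k) m := fun m hm => by
      rw [Finsupp.add_apply, Finsupp.add_apply,
        leadExp_apply_of_le hik (hm.trans (not_le.1 hi).le),
        trailExp_apply_of_lt hik hk (lt_of_le_of_lt hm (not_le.1 hi))]
    simp only [separatingSet, Set.mem_ofPred_eq, hw, hdeg]
    exact and_congr_right' (and_congr_right' (imp_congr_right fun _ =>
      forall₂_congr fun m hm => by rw [hlow m hm]))
  · simp [separatingSet, hw, hdeg, hk₀]

lemma minor_notMem_span_diff (K : Type*) [Field K] (ha : 0 < a) (hb : 0 < b) (hik₀ : i₀ < k₀) :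
    minor K a b i₀ k₀ ∉ Ideal.span (minorsX K a b n \ {minor K a b i₀ k₀}) := fun hmem => by
  have htrail : trailExp a b i₀ k₀ ∉ separatingSet a b i₀ k₀ := by
    by_cases hk₀ : (k₀ : ℕ) + 1 < n
    · simpa using add_trailExp_notMem_of_le (a := a) (k := k₀) hb hk₀ le_rfl 0
    · simpa using add_trailExp_notMem_of_last (b := b) (i := i₀) (i₀ := i₀) ha hk₀ 0
  refine monomial_sub_monomial_notMem_span {p : Fin n × Fin n | p.1 < p.2 ∧ p ≠ (i₀, k₀)}
    (fun p => leadExp a b p.1 p.2) (fun p => trailExp a b p.1 p.2) (separatingSet a b i₀ k₀)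
    (fun p hp c => add_leadExp_mem_iff ha hb hp.1 hik₀ hp.2 c) (leadExp_mem_separatingSet hik₀)
    htrail (Ideal.span_mono ?_ hmem)
  rw [minorsX_eq]
  rintro _ ⟨⟨⟨i, k⟩, hik, rfl⟩, hne⟩
  exact ⟨(i, k), ⟨hik, fun h => hne (by rw [h]; rfl)⟩, rfl⟩

end Minimality

theorem stmt16_general (a b n : ℕ) (ha : 0 < a) (hb : 0 < b)
    (hgcd : Nat.gcd a (rep b n) = 1) (K : Type*) [Field K] :
    RingHom.ker (φmap K a b n) = Ideal.span (minorsX K a b n) ∧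
      ∀ S : Set (MvPolynomial (Fin n) K), S ⊂ minorsX K a b n →
        Ideal.span S ≠ RingHom.ker (φmap K a b n) := by
  have hker : RingHom.ker (φmap K a b n) = Ideal.span (minorsX K a b n) :=
    le_antisymm
      (ker_aeval_X_pow_le (varWeight a b n) (span_minorsX_le_ker K)
        (weight_injOn_isStandard hb hgcd) (exists_isStandard_sub_mem_span K))
      (span_minorsX_le_ker K)
  refine ⟨hker, fun S hS hspan => ?_⟩
  obtain ⟨f, hf, hfS⟩ := Set.exists_of_ssubset hS
  have hmem : f ∈ Ideal.span S := hspan ▸ hker ▸ Ideal.subset_span hf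
  rw [minorsX_eq] at hf
  obtain ⟨⟨i, k⟩, hik, rfl⟩ := hf
  exact minor_notMem_span_diff K ha hb hik
    (Ideal.span_mono (fun g hg => Set.mem_sdiff_singleton.2
      ⟨hS.subset hg, fun h => hfS (by subst h; exact hg)⟩) hmem)

theorem stmt16 (a b n : ℕ) (ha : 0 < a) (hb : 0 < b) (hn : 1 < n)
    (hgcd : Nat.gcd a (rep b n) = 1) (K : Type*) [Field K] :
    RingHom.ker (φmap K a b n) = Ideal.span (minorsX K a b n) ∧
      ∀ S : Set (MvPolynomial (Fin n) K), S ⊂ minorsX K a b n →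
        Ideal.span S ≠ RingHom.ker (φmap K a b n) :=
  stmt16_general a b n ha hb hgcd K
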